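/- Define θ_α(z) = θ(z + ατ/n) θ(z + ατ/n + 1/n) ⋯ θ(z + ατ/n + (n−1)/n) · e^{2πi(αz + α(α−n)τ/(2n) + α/(2n))} for α ∈ ℤ. Then θ_α ∈ Θ_{n,(n−1)/2}(Γ), θ_{α+n} = θ_α, θ_α(z + 1/n) = e^{2πiα/n} θ_α(z), and θ_α(z + τ/n) = e^{−2πi(z + 1/(2n) − (n−1)τ/(2n))} θ_{α+1}(z). -/

import Mathlib

open Complex

/-- The theta function `θ(z) = Σ_{α∈ℤ} (−1)^α e^{2πi(αz + α(α−1)τ/2)}`. -/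
noncomputable def theta (τ z : ℂ) : ℂ :=
  ∑' α : ℤ, (-1 : ℂ) ^ α *
    Complex.exp (2 * Real.pi * I * ((α : ℂ) * z + (α : ℂ) * ((α : ℂ) - 1) / 2 * τ))

/-- `θ_α(z) = θ(z+ατ/n) θ(z+ατ/n+1/n) ⋯ θ(z+ατ/n+(n−1)/n) ·
e^{2πi(αz + α(α−n)τ/(2n) + α/(2n))}`. -/
noncomputable def thetaA (τ : ℂ) (n : ℕ) (α : ℤ) (z : ℂ) : ℂ :=
  (∏ j ∈ Finset.range n, theta τ (z + (α : ℂ) * τ / (n : ℂ) + (j : ℂ) / (n : ℂ))) *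
    Complex.exp (2 * Real.pi * I *
      ((α : ℂ) * z + (α : ℂ) * ((α : ℂ) - (n : ℂ)) * τ / (2 * (n : ℂ)) +
        (α : ℂ) / (2 * (n : ℂ))))

/-- The space `Θ_{n,c}(Γ)`. -/
def IsThetaFun (τ : ℂ) (n : ℕ) (c : ℂ) (f : ℂ → ℂ) : Prop :=
  Differentiable ℂ f ∧ (∀ z, f (z + 1) = f z) ∧
    ∀ z, f (z + τ) =
      (-1 : ℂ) ^ n * Complex.exp (-(2 * Real.pi * I) * ((n : ℂ) * z - c)) * f z

/-!
`θ` is Jacobi's `θ₂` evaluated at `z + (1 - τ)/2`, so `θ ∈ Θ_{1,0}`. The spaces `Θ_{n,c}` multiply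
(degrees and characteristics add), a real translation `z ↦ z + s` sends `Θ_{n,c}` to `Θ_{n,c-ns}`,
the translation `z ↦ z + kτ/n` combined with the character `e^{2πikz}` preserves `Θ_{n,c}`, and
`Θ_{n,c}` depends only on `c mod ℤ`. Hence `P(w) = ∏_j θ(w + j/n) ∈ Θ_{n,-(n-1)/2}` and
`θ_α(z) = P(z + ατ/n) e^{2πi(αz + const)} ∈ Θ_{n,(n-1)/2}`. The translation by `1/n` permutes the
factors of `P` cyclically, and `α ↦ α + n` translates the argument of `P` by `τ`; the remaining
identities are bookkeeping of exponents modulo `2πiℤ`.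
-/

open Real Finset

lemma theta_eq_jacobiTheta₂ (τ z : ℂ) : theta τ z = jacobiTheta₂ (z + (1 - τ) / 2) τ := by
  refine tsum_congr fun α => ?_
  rw [jacobiTheta₂_term, ← Complex.exp_pi_mul_I, ← Complex.exp_int_mul, ← Complex.exp_add]
  ring_nf

lemma exp_two_pi_I_mul_add_int (x : ℂ) (k : ℤ) :
    exp (2 * π * I * (x + k)) = exp (2 * π * I * x) :=
  Complex.exp_eq_exp_iff_exists_int.2 ⟨k, by ring⟩

lemma sum_range_natCast_mul_two {R : Type*} [CommRing R] (n : ℕ) :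
    (∑ j ∈ range n, (j : R)) * 2 = n * (n - 1) := by
  induction n with
  | zero => simp
  | succ m ih =>
    rw [sum_range_succ]
    push_cast
    linear_combination ih

lemma Function.Periodic.prod_range_add_one {M : Type*} [CommMonoid M] {f : ℕ → M} {n : ℕ}
    (hf : Function.Periodic f n) : ∏ j ∈ range n, f (j + 1) = ∏ j ∈ range n, f j := by
  cases n with
  | zero => rfl
  | succ m =>
    rw [prod_range_succ, prod_range_succ']
    simpa using congrArg _ (hf 0)

namespace IsThetaFun

variable {τ c d : ℂ} {m n : ℕ} {f g : ℂ → ℂ}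

lemma add_intCast (hf : IsThetaFun τ n c f) (k : ℤ) : IsThetaFun τ n (c + k) f := by
  refine ⟨hf.1, hf.2.1, fun z => ?_⟩
  rw [hf.2.2, show -(2 * π * I) * (n * z - (c + k)) = -(2 * π * I) * (n * z - c) + k * (2 * π * I)
    by ring, Complex.exp_add, Complex.exp_int_mul_two_pi_mul_I, mul_one]

lemma comp_add (hf : IsThetaFun τ n c f) (s : ℂ) :
    IsThetaFun τ n (c - n * s) (fun z => f (z + s)) := by
  refine ⟨hf.1.comp (differentiable_id.add_const s), fun z => ?_, fun z => ?_⟩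
  · simp only [add_right_comm z, hf.2.1]
  · dsimp only
    rw [add_right_comm z τ, hf.2.2]
    ring_nf

lemma one : IsThetaFun τ 0 0 1 :=
  ⟨differentiable_const 1, fun _ => rfl, fun _ => by simp⟩

lemma mul (hf : IsThetaFun τ m c f) (hg : IsThetaFun τ n d g) :
    IsThetaFun τ (m + n) (c + d) (f * g) := by
  refine ⟨hf.1.mul hg.1, fun z => by simp [hf.2.1, hg.2.1], fun z => ?_⟩
  simp only [Pi.mul_apply, hf.2.2, hg.2.2]
  rw [show -(2 * π * I) * (((m + n : ℕ) : ℂ) * z - (c + d)) =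
    -(2 * π * I) * (m * z - c) + -(2 * π * I) * (n * z - d) by push_cast; ring,
    Complex.exp_add, pow_add]
  ring

lemma prod {ι : Type*} (s : Finset ι) {n : ι → ℕ} {c : ι → ℂ} {f : ι → ℂ → ℂ}
    (h : ∀ i ∈ s, IsThetaFun τ (n i) (c i) (f i)) :
    IsThetaFun τ (∑ i ∈ s, n i) (∑ i ∈ s, c i) (∏ i ∈ s, f i) := by
  classical
  induction s using Finset.induction_on with
  | empty => exact one
  | insert i s hi ih =>
    rw [sum_insert hi, sum_insert hi, prod_insert hi]
    exact (h i (mem_insert_self i s)).mul (ih fun j hj => h j (mem_insert_of_mem hj))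

lemma shift_mul_exp (hf : IsThetaFun τ n c f) (hn : n ≠ 0) (k : ℤ) (b : ℂ) :
    IsThetaFun τ n c (fun z => f (z + k * τ / n) * exp (2 * π * I * (k * z + b))) := by
  have hn' : (n : ℂ) ≠ 0 := Nat.cast_ne_zero.2 hn
  refine ⟨(hf.1.comp (differentiable_id.add_const _)).mul (by fun_prop), fun z => ?_, fun z => ?_⟩
  · simp only [add_right_comm z, hf.2.1, show (k : ℂ) * (z + 1) + b = k * z + b + k by ring,
      exp_two_pi_I_mul_add_int]
  · have hexp : exp (-(2 * π * I) * (n * (z + k * τ / n) - c)) * exp (2 * π * I * (k * (z + τ) + b))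
        = exp (-(2 * π * I) * (n * z - c)) * exp (2 * π * I * (k * z + b)) := by
      rw [← Complex.exp_add, ← Complex.exp_add]
      congr 1
      field_simp
      ring
    dsimp only
    rw [add_right_comm z τ, hf.2.2]
    linear_combination (-1) ^ n * f (z + k * τ / n) * hexp

end IsThetaFun

lemma theta_add_one (τ z : ℂ) : theta τ (z + 1) = theta τ z := by
  rw [theta_eq_jacobiTheta₂, theta_eq_jacobiTheta₂, add_right_comm, jacobiTheta₂_add_left]

lemma isThetaFun_theta {τ : ℂ} (hτ : 0 < τ.im) : IsThetaFun τ 1 0 (theta τ) := by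
  refine ⟨fun z => ?_, theta_add_one τ, fun z => ?_⟩
  · simp only [funext (theta_eq_jacobiTheta₂ τ)]
    exact (differentiableAt_jacobiTheta₂_fst _ hτ).comp z (differentiableAt_id.add_const _)
  · rw [theta_eq_jacobiTheta₂, theta_eq_jacobiTheta₂, add_right_comm, jacobiTheta₂_add_left',
      show -π * I * (τ + 2 * (z + (1 - τ) / 2)) = -(2 * π * I) * (1 * z - 0) + -(π * I) by ring,
      Complex.exp_add, Complex.exp_neg (π * I), Complex.exp_pi_mul_I]
    push_cast
    ring

noncomputable def thetaProd (τ : ℂ) (n : ℕ) (w : ℂ) : ℂ :=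
  ∏ j ∈ range n, theta τ (w + j / n)

lemma isThetaFun_thetaProd {τ : ℂ} (hτ : 0 < τ.im) {n : ℕ} (hn : n ≠ 0) :
    IsThetaFun τ n (-((n - 1) / 2)) (thetaProd τ n) := by
  have h := IsThetaFun.prod (range n) fun j _ => (isThetaFun_theta hτ).comp_add (j / n)
  have hn₀ : (n : ℂ) ≠ 0 := Nat.cast_ne_zero.2 hn
  convert h using 1
  · simp
  · simp only [Nat.cast_one, zero_sub, one_mul, sum_neg_distrib, ← sum_div]
    field_simp
    linear_combination sum_range_natCast_mul_two (R := ℂ) n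
  · ext w
    simp [thetaProd, prod_apply]

lemma thetaProd_add_inv_natCast (τ : ℂ) {n : ℕ} (hn : n ≠ 0) (w : ℂ) :
    thetaProd τ n (w + 1 / n) = thetaProd τ n w := by
  have hn₀ : (n : ℂ) ≠ 0 := Nat.cast_ne_zero.2 hn
  have hper : Function.Periodic (fun j : ℕ => theta τ (w + j / n)) n := fun j => by
    dsimp only
    rw [← theta_add_one τ (w + j / n)]
    congr 1
    push_cast
    field_simp
    ring
  rw [thetaProd, thetaProd, ← hper.prod_range_add_one]
  refine prod_congr rfl fun j _ => ?_
  congr 1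
  push_cast
  ring

noncomputable def thetaAExponent (τ : ℂ) (n : ℕ) (α : ℤ) (z : ℂ) : ℂ :=
  α * z + α * (α - n) * τ / (2 * n) + α / (2 * n)

lemma thetaA_eq (τ : ℂ) (n : ℕ) (α : ℤ) (z : ℂ) :
    thetaA τ n α z = thetaProd τ n (z + α * τ / n) * exp (2 * π * I * thetaAExponent τ n α z) :=
  rfl

section thetaA

variable {τ : ℂ} {n : ℕ}

lemma isThetaFun_thetaA (hτ : 0 < τ.im) (hn : n ≠ 0) (α : ℤ) :
    IsThetaFun τ n ((n - 1) / 2) (thetaA τ n α) := by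
  have h := ((isThetaFun_thetaProd hτ hn).shift_mul_exp hn α
    (α * (α - n) * τ / (2 * n) + α / (2 * n))).add_intCast (n - 1)
  convert h using 1
  · push_cast
    ring
  · ext z
    rw [thetaA_eq, thetaAExponent, add_assoc]

lemma thetaA_add_natCast (hτ : 0 < τ.im) (hn : n ≠ 0) (α : ℤ) :
    thetaA τ n (α + n) = thetaA τ n α := by
  have hn₀ : (n : ℂ) ≠ 0 := Nat.cast_ne_zero.2 hn
  funext z
  have hexp : exp (n * (π * I)) * exp (-(2 * π * I) * (n * (z + α * τ / n) - -((n - 1) / 2))) *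
      exp (2 * π * I * thetaAExponent τ n (α + n) z) =
        exp (2 * π * I * thetaAExponent τ n α z) := by
    rw [← Complex.exp_add, ← Complex.exp_add, thetaAExponent, thetaAExponent]
    exact Complex.exp_eq_exp_iff_exists_int.2 ⟨1, by push_cast; field_simp; ring⟩
  rw [thetaA_eq, thetaA_eq, show z + ((α + n : ℤ) : ℂ) * τ / n = z + α * τ / n + τ by
    push_cast; field_simp; ring, (isThetaFun_thetaProd hτ hn).2.2, ← Complex.exp_pi_mul_I,
    ← Complex.exp_nat_mul]
  linear_combination thetaProd τ n (z + α * τ / n) * hexp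

lemma thetaA_add_inv_natCast (hn : n ≠ 0) (α : ℤ) (z : ℂ) :
    thetaA τ n α (z + 1 / n) = exp (2 * π * I * α / n) * thetaA τ n α z := by
  have hexp : exp (2 * π * I * thetaAExponent τ n α (z + 1 / n)) =
      exp (2 * π * I * α / n) * exp (2 * π * I * thetaAExponent τ n α z) := by
    rw [← Complex.exp_add, thetaAExponent, thetaAExponent]
    ring_nf
  rw [thetaA_eq, thetaA_eq, add_right_comm z, thetaProd_add_inv_natCast τ hn, hexp]
  ring

lemma thetaA_add_div_natCast (hn : n ≠ 0) (α : ℤ) (z : ℂ) :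
    thetaA τ n α (z + τ / n) =
      exp (-(2 * π * I) * (z + 1 / (2 * n) - (n - 1) / (2 * n) * τ)) * thetaA τ n (α + 1) z := by
  have hn₀ : (n : ℂ) ≠ 0 := Nat.cast_ne_zero.2 hn
  have hexp : exp (2 * π * I * thetaAExponent τ n α (z + τ / n)) =
      exp (-(2 * π * I) * (z + 1 / (2 * n) - (n - 1) / (2 * n) * τ)) *
        exp (2 * π * I * thetaAExponent τ n (α + 1) z) := by
    rw [← Complex.exp_add, thetaAExponent, thetaAExponent]
    congr 1
    push_cast
    field_simp
    ring
  rw [thetaA_eq, thetaA_eq, hexp, show z + τ / n + α * τ / n = z + ((α + 1 : ℤ) : ℂ) * τ / n by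
    push_cast; ring]
  ring

end thetaA

/-- `θ_α ∈ Θ_{n,(n−1)/2}(Γ)`, `θ_{α+n} = θ_α`, `θ_α(z+1/n) = e^{2πiα/n} θ_α(z)`, and
`θ_α(z+τ/n) = e^{−2πi(z+1/(2n)−(n−1)τ/(2n))} θ_{α+1}(z)`. -/
theorem thetaA_properties (τ : ℂ) (hτ : 0 < τ.im) (n : ℕ) (hn : 0 < n) (α : ℤ) :
    IsThetaFun τ n (((n : ℂ) - 1) / 2) (thetaA τ n α) ∧
    thetaA τ n (α + n) = thetaA τ n α ∧
    (∀ z, thetaA τ n α (z + 1 / (n : ℂ)) =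
      Complex.exp (2 * Real.pi * I * (α : ℂ) / (n : ℂ)) * thetaA τ n α z) ∧
    (∀ z, thetaA τ n α (z + τ / (n : ℂ)) =
      Complex.exp (-(2 * Real.pi * I) *
        (z + 1 / (2 * (n : ℂ)) - ((n : ℂ) - 1) / (2 * (n : ℂ)) * τ)) *
        thetaA τ n (α + 1) z) :=
  ⟨isThetaFun_thetaA hτ hn.ne' α, thetaA_add_natCast hτ hn.ne' α,
    thetaA_add_inv_natCast hn.ne' α, thetaA_add_div_natCast hn.ne' α⟩
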